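/- For every integer k ≥ 1, the join G = (k+2)K_2 ∨ kK_1 (the graph on 3k+4 vertices obtained from the disjoint union of k+2 copies of K_2 and k isolated vertices by adding all edges between the k isolated vertices and the 2k+4 vertices of the copies of K_2) satisfies κ(G) = k and α(G) = k+2, and G has no 2-factor with at most two connected components. -/

import Mathlib

open SimpleGraph

variable {V : Type*}

/-- The independence number of a finite simple graph: the maximum size of a set of
pairwise non-adjacent vertices. -/
noncomputable def indepNum [Fintype V] (G : SimpleGraph V) : ℕ :=
  sSup {n : ℕ | ∃ s : Finset V, (∀ x ∈ s, ∀ y ∈ s, x ≠ y → ¬ G.Adj x y) ∧ s.card = n}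

/-- The vertex connectivity of a finite simple graph: the minimum size of a vertex set
whose removal leaves a graph that is disconnected or has at most one vertex. -/
noncomputable def vertexConnectivity [Fintype V] (G : SimpleGraph V) : ℕ :=
  sInf {k : ℕ | ∃ S : Finset V, S.card = k ∧
    (¬ (G.induce ((S : Set V)ᶜ)).Connected ∨ Fintype.card V ≤ S.card + 1)}

/-- `G` has a 2-factor (a spanning subgraph in which every vertex has degree exactly 2)
with at most two connected components. -/
def HasTwoFactorAtMostTwo [Fintype V] (G : SimpleGraph V) : Prop :=
  ∃ F : G.Subgraph, F.IsSpanning ∧ (∀ v : V, (F.neighborSet v).ncard = 2) ∧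
    Nat.card F.coe.ConnectedComponent ≤ 2

/-- The disjoint union of `a` copies of `K₂`. -/
def disjK2 (a : ℕ) : SimpleGraph (Fin a × Fin 2) where
  Adj p q := p.1 = q.1 ∧ p ≠ q
  symm := ⟨fun p q h => ⟨h.1.symm, h.2.symm⟩⟩
  loopless := ⟨fun p h => h.2 rfl⟩

/-- The join of two graphs: their disjoint union together with all edges between them. -/
def graphJoin {α β : Type*} (G₁ : SimpleGraph α) (G₂ : SimpleGraph β) :
    SimpleGraph (α ⊕ β) where
  Adj x y := match x, y with
    | Sum.inl a, Sum.inl b => G₁.Adj a b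
    | Sum.inr a, Sum.inr b => G₂.Adj a b
    | _, _ => True
  symm := by
    constructor
    rintro (a | a) (b | b) h
    · exact h.symm
    · trivial
    · trivial
    · exact h.symm
  loopless := by
    constructor
    rintro (a | a) h
    · exact G₁.loopless.irrefl a h
    · exact G₂.loopless.irrefl a h

abbrev Jg (k : ℕ) := graphJoin (disjK2 (k + 2)) (⊥ : SimpleGraph (Fin k))

lemma adj_ll {k : ℕ} {a b} : (Jg k).Adj (Sum.inl a) (Sum.inl b) ↔ a.1 = b.1 ∧ a ≠ b := Iff.rfl
lemma adj_lr {k : ℕ} {a r} : (Jg k).Adj (Sum.inl a) (Sum.inr r) := trivial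
lemma adj_rl {k : ℕ} {r a} : (Jg k).Adj (Sum.inr r) (Sum.inl a) := trivial
lemma not_adj_rr {k : ℕ} {r r'} : ¬ (Jg k).Adj (Sum.inr r) (Sum.inr r') := fun h => h


lemma fin2_eq {a b c : Fin 2} (h1 : b ≠ a) (h2 : c ≠ a) : b = c := by
  have hb := b.isLt; have hc := c.isLt; have ha := a.isLt
  have h1' : b.val ≠ a.val := fun h => h1 (Fin.ext h)
  have h2' : c.val ≠ a.val := fun h => h2 (Fin.ext h)
  exact Fin.ext (by omega)

lemma noTwoFactor (k : ℕ) (F : (Jg k).Subgraph)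
    (hdeg : ∀ v, (F.neighborSet v).ncard = 2) : False := by
  classical
  have hA : ∀ a : Fin (k+2) × Fin 2, ∃ r : Fin k, F.Adj (Sum.inl a) (Sum.inr r) := by
    intro a
    by_contra h
    push_neg at h
    have h2 : 1 < (F.neighborSet (Sum.inl a)).ncard := by rw [hdeg]; norm_num
    rw [Set.one_lt_ncard_iff (Set.toFinite _)] at h2
    obtain ⟨x, y, hx, hy, hxy⟩ := h2
    rw [SimpleGraph.Subgraph.mem_neighborSet] at hx hy
    obtain (b | r) := x
    · obtain (c | r) := y
      · have hb := F.adj_sub hx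
        have hc := F.adj_sub hy
        rw [adj_ll] at hb hc
        apply hxy
        have hb2 : b.2 ≠ a.2 := fun h => hb.2 (Prod.ext hb.1 h.symm)
        have hc2 : c.2 ≠ a.2 := fun h => hc.2 (Prod.ext hc.1 h.symm)
        have : b = c := Prod.ext (hb.1.symm.trans hc.1) (fin2_eq hb2 hc2)
        rw [this]
      · exact h r hy
    · exact h r hx
  -- Lemma B: each right vertex has exactly two F-neighbors, all on the left
  have hB : ∀ r : Fin k,
      (Finset.univ.filter (fun a : Fin (k+2) × Fin 2 => F.Adj (Sum.inl a) (Sum.inr r))).card = 2 := by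
    intro r
    have hset : F.neighborSet (Sum.inr r) =
        Sum.inl '' ((Finset.univ.filter (fun a : Fin (k+2) × Fin 2 =>
          F.Adj (Sum.inl a) (Sum.inr r))) : Set (Fin (k+2) × Fin 2)) := by
      ext x
      simp only [SimpleGraph.Subgraph.mem_neighborSet, Set.mem_image, Finset.coe_filter,
        Set.mem_setOf_eq, Finset.mem_univ, true_and]
      constructor
      · intro hx
        obtain (b | r') := x
        · exact ⟨b, hx.symm, rfl⟩
        · exact absurd (F.adj_sub hx) not_adj_rr
      · rintro ⟨b, hb, rfl⟩
        exact hb.symm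
    have := hdeg (Sum.inr r)
    rw [hset, Set.ncard_image_of_injective _ Sum.inl_injective, Set.ncard_coe_finset] at this
    exact this
  -- double counting
  have key : (2 * (k + 2) : ℕ) ≤ 2 * k := by
    calc (2 * (k + 2) : ℕ)
        = ∑ _a : Fin (k+2) × Fin 2, 1 := by
          simp [Fintype.card_prod]; ring
      _ ≤ ∑ a : Fin (k+2) × Fin 2,
            (Finset.univ.filter (fun r : Fin k => F.Adj (Sum.inl a) (Sum.inr r))).card := by
          apply Finset.sum_le_sum
          intro a _
          obtain ⟨r, hr⟩ := hA a
          exact Finset.card_pos.mpr ⟨r, by simp [hr]⟩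
      _ = ∑ a : Fin (k+2) × Fin 2, ∑ r : Fin k,
            (if F.Adj (Sum.inl a) (Sum.inr r) then 1 else 0) := by
          refine Finset.sum_congr rfl fun a _ => ?_
          rw [Finset.card_filter]
      _ = ∑ r : Fin k, ∑ a : Fin (k+2) × Fin 2,
            (if F.Adj (Sum.inl a) (Sum.inr r) then 1 else 0) := Finset.sum_comm
      _ = ∑ r : Fin k,
            (Finset.univ.filter (fun a : Fin (k+2) × Fin 2 =>
              F.Adj (Sum.inl a) (Sum.inr r))).card := by
          refine Finset.sum_congr rfl fun r _ => ?_
          rw [Finset.card_filter]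
      _ = 2 * k := by simp [hB]; ring
  omega


lemma reachable_inv {α β : Type*} {H : SimpleGraph α} (f : α → β)
    (hf : ∀ u v, H.Adj u v → f u = f v) {u v} (h : H.Reachable u v) : f u = f v := by
  obtain ⟨w⟩ := h
  induction w with
  | nil => rfl
  | cons h p ih => exact (hf _ _ h).trans ih

lemma indep_bound (k : ℕ) (s : Finset ((Fin (k+2) × Fin 2) ⊕ Fin k))
    (hs : ∀ x ∈ s, ∀ y ∈ s, x ≠ y → ¬ (Jg k).Adj x y) : s.card ≤ k + 2 := by
  classical
  by_cases hr : ∃ r : Fin k, Sum.inr r ∈ s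
  · obtain ⟨r, hrm⟩ := hr
    have hsub : s ⊆ Finset.univ.image (Sum.inr : Fin k → _) := by
      intro x hx
      obtain (a | r') := x
      · exact absurd adj_lr (hs _ hx _ hrm (by simp))
      · simp
    calc s.card ≤ _ := Finset.card_le_card hsub
      _ ≤ k + 2 := by
          have := Finset.card_image_le (s := (Finset.univ : Finset (Fin k)))
            (f := (Sum.inr : Fin k → (Fin (k+2) × Fin 2) ⊕ Fin k))
          simp at this ⊢; omega
  · push_neg at hr
    have : s.card ≤ (Finset.univ : Finset (Fin (k+2))).card := by
      apply Finset.card_le_card_of_injOn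
        (fun x => Sum.elim Prod.fst (fun _ => (0 : Fin (k+2))) x)
      · intro a _; exact Finset.mem_univ _
      · intro x hx y hy hxy
        obtain (a | r) := x
        · obtain (b | r') := y
          · simp only [Sum.elim_inl] at hxy
            by_contra hne
            have hne' : a ≠ b := fun h => hne (by rw [h])
            exact hs _ hx _ hy hne (adj_ll.mpr ⟨hxy, hne'⟩)
          · exact absurd hy (hr r')
        · exact absurd hx (hr r)
    simpa using this

lemma indep_eq (k : ℕ) : _root_.indepNum (Jg k) = k + 2 := by
  classical
  apply le_antisymm
  · apply csSup_le
    · exact ⟨0, ⟨∅, by simp⟩⟩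
    · rintro n ⟨s, hs, rfl⟩
      exact indep_bound k s hs
  · apply le_csSup
    · exact ⟨k + 2, by rintro n ⟨s, hs, rfl⟩; exact indep_bound k s hs⟩
    · refine ⟨Finset.univ.image (fun i : Fin (k+2) => (Sum.inl (i, 0) : (Fin (k+2) × Fin 2) ⊕ Fin k)), ?_, ?_⟩
      · intro x hx y hy hne hadj
        simp only [Finset.mem_image, Finset.mem_univ, true_and] at hx hy
        obtain ⟨i, rfl⟩ := hx
        obtain ⟨j, rfl⟩ := hy
        rw [adj_ll] at hadj
        exact hne (by rw [show (i,(0:Fin 2)) = (j,0) from Prod.ext hadj.1 rfl])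
      · rw [Finset.card_image_of_injective _ (fun i j h => by
          injection h with h'; exact (Prod.ext_iff.mp h').1)]
        simp

lemma vc_eq (k : ℕ) (hk : 1 ≤ k) : vertexConnectivity (Jg k) = k := by
  classical
  have hcardV : Fintype.card ((Fin (k+2) × Fin 2) ⊕ Fin k) = 3 * k + 4 := by simp; ring
  have hmem : k ∈ {m : ℕ | ∃ S : Finset ((Fin (k+2) × Fin 2) ⊕ Fin k), S.card = m ∧
      (¬ ((Jg k).induce ((S : Set ((Fin (k+2) × Fin 2) ⊕ Fin k))ᶜ)).Connected ∨
        Fintype.card ((Fin (k+2) × Fin 2) ⊕ Fin k) ≤ S.card + 1)} := by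
    refine ⟨Finset.univ.image (Sum.inr : Fin k → _), ?_, Or.inl ?_⟩
    · rw [Finset.card_image_of_injective _ Sum.inr_injective]; simp
    · intro hc
      set S : Finset ((Fin (k+2) × Fin 2) ⊕ Fin k) :=
        Finset.univ.image (Sum.inr : Fin k → _) with hS
      have hmem1 : (Sum.inl ((0 : Fin (k+2)), (0 : Fin 2)) :
          (Fin (k+2) × Fin 2) ⊕ Fin k) ∈ ((S : Set _)ᶜ) := by simp [hS]
      have hmem2 : (Sum.inl ((1 : Fin (k+2)), (0 : Fin 2)) :
          (Fin (k+2) × Fin 2) ⊕ Fin k) ∈ ((S : Set _)ᶜ) := by simp [hS]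
      have hr := hc.preconnected ⟨_, hmem1⟩ ⟨_, hmem2⟩
      have := reachable_inv (H := (Jg k).induce ((S : Set _)ᶜ))
        (fun x => Sum.elim Prod.fst (fun _ => (0 : Fin (k+2))) x.val) ?_ hr
      · simp only [Sum.elim_inl] at this
        have h01 : (0 : Fin (k+2)) ≠ 1 := by
          intro h
          have := congrArg Fin.val h
          simp at this
        exact h01 this
      · rintro ⟨(a | r), hu⟩ ⟨(b | r'), hv⟩ hadj
        · exact hadj.1
        · exact absurd hv (by simp [hS])
        · exact absurd hu (by simp [hS])
        · exact absurd hu (by simp [hS])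
  apply le_antisymm (Nat.sInf_le hmem)
  refine le_csInf ⟨k, hmem⟩ ?_
  rintro m ⟨S, rfl, hdisj⟩
  by_contra hlt
  push_neg at hlt
  obtain ⟨r, hr⟩ : ∃ r : Fin k, Sum.inr r ∉ S := by
    by_contra h
    push_neg at h
    have : Finset.univ.image (Sum.inr : Fin k → _) ⊆ S := by
      intro x hx
      simp only [Finset.mem_image, Finset.mem_univ, true_and] at hx
      obtain ⟨r, rfl⟩ := hx
      exact h r
    have := Finset.card_le_card this
    rw [Finset.card_image_of_injective _ Sum.inr_injective] at this
    simp at this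
    omega
  obtain ⟨a, ha⟩ : ∃ a : Fin (k+2) × Fin 2, Sum.inl a ∉ S := by
    by_contra h
    push_neg at h
    have : Finset.univ.image (Sum.inl : Fin (k+2) × Fin 2 → _) ⊆ S := by
      intro x hx
      simp only [Finset.mem_image, Finset.mem_univ, true_and] at hx
      obtain ⟨b, rfl⟩ := hx
      exact h b
    have := Finset.card_le_card this
    rw [Finset.card_image_of_injective _ Sum.inl_injective] at this
    simp at this
    omega
  have hconn : ((Jg k).induce ((S : Set ((Fin (k+2) × Fin 2) ⊕ Fin k))ᶜ)).Connected := by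
    have hrmem : (Sum.inr r : (Fin (k+2) × Fin 2) ⊕ Fin k) ∈ ((S : Set _)ᶜ) := hr
    have hamem : (Sum.inl a : (Fin (k+2) × Fin 2) ⊕ Fin k) ∈ ((S : Set _)ᶜ) := ha
    set w0 : ((S : Set ((Fin (k+2) × Fin 2) ⊕ Fin k))ᶜ : Set _) := ⟨Sum.inr r, hrmem⟩
    have hreach : ∀ u, ((Jg k).induce ((S : Set _)ᶜ)).Reachable u w0 := by
      rintro ⟨(b | r'), hu⟩
      · exact SimpleGraph.Adj.reachable trivial
      · exact (SimpleGraph.Adj.reachable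
          (v := (⟨Sum.inl a, hamem⟩ : ((S : Set ((Fin (k+2) × Fin 2) ⊕ Fin k))ᶜ : Set _)))
          trivial).trans (SimpleGraph.Adj.reachable trivial)
    haveI : Nonempty ((S : Set ((Fin (k+2) × Fin 2) ⊕ Fin k))ᶜ : Set _) := ⟨w0⟩
    exact ⟨fun u v => (hreach u).trans (hreach v).symm⟩
  rcases hdisj with h | h
  · exact h hconn
  · omega


theorem statement18 (k : ℕ) (hk : 1 ≤ k) :
    Fintype.card ((Fin (k + 2) × Fin 2) ⊕ Fin k) = 3 * k + 4 ∧
    vertexConnectivity (graphJoin (disjK2 (k + 2)) (⊥ : SimpleGraph (Fin k))) = k ∧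
    _root_.indepNum (graphJoin (disjK2 (k + 2)) (⊥ : SimpleGraph (Fin k))) = k + 2 ∧
    ¬ HasTwoFactorAtMostTwo (graphJoin (disjK2 (k + 2)) (⊥ : SimpleGraph (Fin k))) := by
  refine ⟨by simp; ring, vc_eq k hk, indep_eq k, ?_⟩
  rintro ⟨F, -, hdeg, -⟩
  exact noTwoFactor k F hdeg
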